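/- For every q > 1/n, the coordinate function x_i of the n-dimensional Peano curve is nowhere q-Hölder continuous: for every t ∈ [0,1] there do NOT exist constants C, δ > 0 such that |x_i(t) − x_i(t')| ≤ C|t − t'|^q for all t' ∈ [0,1] with |t − t'| < δ. In particular, x_i is nowhere differentiable. -/

import Mathlib

open scoped BigOperators ENNReal

/-- `Φ` : evaluation of a ternary digit sequence (digits at indices `1,2,3,…`). -/
noncomputable def Phi (t : ℕ → ℕ) : ℝ := ∑' k : ℕ, (t (k + 1) : ℝ) / 3 ^ (k + 1)

/-- A sequence of ternary digits (elements of `D = {0,1,2}`). -/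
def IsDigitSeq (t : ℕ → ℕ) : Prop := ∀ k, t k ≤ 2

/-- `S_{i+jn}(𝐭) = ∑_{k=1}^{i+jn} t_k − ∑_{s=0}^{j} t_{i+sn}`. -/
def S (n i j : ℕ) (t : ℕ → ℕ) : ℤ :=
  (∑ k ∈ Finset.Icc 1 (i + j * n), (t k : ℤ)) -
    ∑ s ∈ Finset.range (j + 1), (t (i + s * n) : ℤ)

/-- The operator `ξ(a) = 2 − a`, as a permutation of `ℝ` (so that integer powers
`ξ^m`, `m : ℤ`, make sense). -/
def xiPerm : Equiv.Perm ℝ :=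
  ⟨fun a => 2 - a, fun a => 2 - a, fun a => by dsimp; ring, fun a => by dsimp; ring⟩

/-- `x_i(𝐭) = ∑_{j=0}^∞ ξ^{S_{i+jn}(𝐭)}(t_{i+jn}) / 3^{j+1}`. -/
noncomputable def xcoord (n i : ℕ) (t : ℕ → ℕ) : ℝ :=
  ∑' j : ℕ, ((xiPerm ^ (S n i j t)) ((t (i + j * n) : ℝ))) / 3 ^ (j + 1)

/-- The canonical ternary digit expansion of `t ∈ [0,1]` (all digits `2` for `t = 1`). -/
noncomputable def ternaryDigit (t : ℝ) (k : ℕ) : ℕ :=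
  if t = 1 then 2 else (⌊t * 3 ^ k⌋).toNat % 3

/-- The `i`-th coordinate function of the `n`-dimensional Peano curve, as a function
on `[0,1]` (via the canonical ternary representation; by well-definedness this agrees
with `xcoord` on any ternary representation). -/
noncomputable def peanoCoord (n i : ℕ) (t : ℝ) : ℝ := xcoord n i (ternaryDigit t)


/-!
Changing the ternary digit of `t` at position `m = i + j n` by one moves `t` by exactly `3⁻ᵐ`.
No exponent `S_{i+j'n}` involves the digit `t_m`, so the only term of `x_i` that changes is the
`j`-th one, and `x_i` moves by exactly `3^{-(j+1)} ≥ |t - t'| ^ (1/n) / 3`. Such points `t'`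
exist at every scale, which rules out a `q`-Hölder bound for `q > 1/n`; differentiability
within `[0,1]` would give a `1`-Hölder bound.
-/

def IsHolderWithinAt (f : ℝ → ℝ) (s : Set ℝ) (t q : ℝ) : Prop :=
  ∃ C : ℝ, 0 < C ∧ ∃ δ : ℝ, 0 < δ ∧
    ∀ t' ∈ s, |t - t'| < δ → |f t - f t'| ≤ C * |t - t'| ^ q

lemma not_isHolderWithinAt_of_forall_exists {f : ℝ → ℝ} {s : Set ℝ} {t p q c : ℝ}
    (hpq : p < q) (hc : 0 < c)
    (h : ∀ δ > 0, ∃ t' ∈ s, 0 < |t - t'| ∧ |t - t'| < δ ∧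
      c * |t - t'| ^ p ≤ |f t - f t'|) :
    ¬ IsHolderWithinAt f s t q := by
  rintro ⟨C, hC, δ, hδ, hH⟩
  have hqp : 0 < q - p := sub_pos.2 hpq
  set ε := (c / C) ^ (q - p)⁻¹
  obtain ⟨t', ht', hpos, hlt, hge⟩ := h (min δ ε) (lt_min hδ (by positivity))
  set r := |t - t'|
  have hsmall : r ^ (q - p) < c / C :=
    calc r ^ (q - p) < ε ^ (q - p) :=
          Real.rpow_lt_rpow hpos.le (hlt.trans_le (min_le_right _ _)) hqp
      _ = c / C := Real.rpow_inv_rpow (by positivity) hqp.ne'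
  have hbig : C * r ^ q < c * r ^ p :=
    calc C * r ^ q = C * r ^ (q - p) * r ^ p := by
          rw [mul_assoc, ← Real.rpow_add hpos, sub_add_cancel]
      _ < C * (c / C) * r ^ p := by gcongr
      _ = c * r ^ p := by field_simp
  linarith [hH t' ht' (hlt.trans_le (min_le_left _ _))]

lemma DifferentiableWithinAt.isHolderWithinAt_one {f : ℝ → ℝ} {s : Set ℝ} {t : ℝ}
    (hf : DifferentiableWithinAt ℝ f s t) : IsHolderWithinAt f s t 1 := by
  obtain ⟨C, hC, hO⟩ := hf.hasFDerivWithinAt.isBigO_sub.exists_pos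
  obtain ⟨δ, hδ, hball⟩ := Metric.mem_nhdsWithin_iff.1 hO.bound
  refine ⟨C, hC, δ, hδ, fun t' ht' hdist => ?_⟩
  have := hball ⟨by rwa [Metric.mem_ball, Real.dist_eq, abs_sub_comm], ht'⟩
  simpa [Real.rpow_one, abs_sub_comm] using this

noncomputable def ternaryValue (a : ℕ → ℝ) : ℝ := ∑' k, a k / 3 ^ (k + 1)

section ternaryValue

variable {a b : ℕ → ℝ} {M : ℝ}

lemma summable_div_three_pow (ha : ∀ k, |a k| ≤ M) :
    Summable fun k => a k / 3 ^ (k + 1) := by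
  have hg : Summable fun k : ℕ => M / 3 * (1 / 3 : ℝ) ^ k :=
    (summable_geometric_of_lt_one (by norm_num) (by norm_num)).mul_left _
  refine Summable.of_norm_bounded hg fun k => ?_
  have h3 : (0 : ℝ) < 3 ^ (k + 1) := by positivity
  calc ‖a k / 3 ^ (k + 1)‖ = |a k| / 3 ^ (k + 1) := by
        rw [Real.norm_eq_abs, abs_div, abs_of_pos h3]
    _ ≤ M / 3 ^ (k + 1) := by gcongr; exact ha k
    _ = M / 3 * (1 / 3) ^ k := by rw [one_div_pow, pow_succ]; field_simp

lemma three_mul_ternaryValue (ha : ∀ k, |a k| ≤ M) :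
    3 * ternaryValue a = a 0 + ternaryValue fun k => a (k + 1) := by
  rw [ternaryValue, (summable_div_three_pow ha).tsum_eq_zero_add, ternaryValue, mul_add,
    ← tsum_mul_left]
  congr 1
  · ring
  · congr 1
    funext k
    rw [pow_succ 3 (k + 1)]
    field_simp

lemma ternaryValue_const_two : ternaryValue (fun _ => 2) = 1 := by
  have h := three_mul_ternaryValue (a := fun _ => (2 : ℝ)) (M := 2) fun _ => by norm_num
  linarith

lemma ternaryValue_le_ternaryValue (ha : ∀ k, |a k| ≤ M) (hb : ∀ k, |b k| ≤ M)
    (h : ∀ k, a k ≤ b k) : ternaryValue a ≤ ternaryValue b :=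
  (summable_div_three_pow ha).tsum_le_tsum (fun k => by gcongr; exact h k)
    (summable_div_three_pow hb)

lemma ternaryValue_lt_ternaryValue (ha : ∀ k, |a k| ≤ M) (hb : ∀ k, |b k| ≤ M)
    (h : ∀ k, a k ≤ b k) {j : ℕ} (hj : a j < b j) : ternaryValue a < ternaryValue b :=
  (summable_div_three_pow ha).tsum_lt_tsum (fun k => by gcongr; exact h k) (by gcongr)
    (summable_div_three_pow hb)

lemma ternaryValue_sub_of_eq_of_ne (ha : ∀ k, |a k| ≤ M) (hb : ∀ k, |b k| ≤ M) {j : ℕ}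
    (h : ∀ k ≠ j, a k = b k) :
    ternaryValue a - ternaryValue b = (a j - b j) / 3 ^ (j + 1) := by
  rw [ternaryValue, ternaryValue,
    ← (summable_div_three_pow ha).tsum_sub (summable_div_three_pow hb), tsum_eq_single j]
  · ring
  · intro k hk
    rw [h k hk, sub_self]

lemma ternaryValue_two_of_lt (m : ℕ) :
    ternaryValue (fun k => if k < m then 2 else 0) = 1 - 1 / 3 ^ m := by
  induction m with
  | zero => simp [ternaryValue]
  | succ m ih =>
    have h := three_mul_ternaryValue (M := 2) (a := fun k => if k < m + 1 then (2 : ℝ) else 0)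
      fun k => by split_ifs <;> norm_num
    simp only [Nat.add_lt_add_iff_right, ih, Nat.zero_lt_succ, if_true] at h
    have h3 : (1 : ℝ) / 3 ^ (m + 1) = 1 / 3 ^ m / 3 := by rw [pow_succ, div_div]
    linarith

end ternaryValue

lemma IsDigitSeq.abs_le {d : ℕ → ℕ} (hd : IsDigitSeq d) (k : ℕ) : |(d k : ℝ)| ≤ 2 := by
  rw [abs_of_nonneg (Nat.cast_nonneg _)]
  exact_mod_cast hd k

lemma isDigitSeq_ternaryDigit (t : ℝ) : IsDigitSeq (ternaryDigit t) := by
  intro k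
  unfold ternaryDigit
  split_ifs <;> omega

def ternaryPrefix (d : ℕ → ℕ) : ℕ → ℕ
  | 0 => 0
  | m + 1 => 3 * ternaryPrefix d m + d (m + 1)

/-- The ternary expansion of a point of `[0,1)` that `ternaryDigit` produces. -/
structure IsCanonicalDigitSeq (d : ℕ → ℕ) : Prop where
  isDigitSeq : IsDigitSeq d
  zero : d 0 = 0
  exists_lt_two : ∀ m, ∃ k, m < k ∧ d k < 2

section Phi

variable {d d' : ℕ → ℕ}

lemma Phi_eq_ternaryValue (d : ℕ → ℕ) : Phi d = ternaryValue fun k => (d (k + 1) : ℝ) := rfl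

lemma Phi_nonneg (d : ℕ → ℕ) : 0 ≤ Phi d :=
  tsum_nonneg fun _ => by positivity

lemma Phi_le_one (hd : IsDigitSeq d) : Phi d ≤ 1 := by
  rw [Phi_eq_ternaryValue, ← ternaryValue_const_two]
  exact ternaryValue_le_ternaryValue (fun _ => hd.abs_le _) (fun _ => by norm_num)
    fun k => by exact_mod_cast hd (k + 1)

lemma Phi_mem_Icc (hd : IsDigitSeq d) : Phi d ∈ Set.Icc (0 : ℝ) 1 :=
  ⟨Phi_nonneg d, Phi_le_one hd⟩

lemma Phi_lt_one (hd : IsDigitSeq d) {j : ℕ} (hj : d (j + 1) < 2) : Phi d < 1 := by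
  rw [Phi_eq_ternaryValue, ← ternaryValue_const_two]
  exact ternaryValue_lt_ternaryValue (fun _ => hd.abs_le _) (fun _ => by norm_num)
    (fun k => by exact_mod_cast hd (k + 1)) (j := j) (by exact_mod_cast hj)

lemma three_mul_Phi (hd : IsDigitSeq d) : 3 * Phi d = d 1 + Phi fun k => d (k + 1) :=
  three_mul_ternaryValue fun _ => hd.abs_le _

lemma Phi_mul_three_pow (hd : IsDigitSeq d) (m : ℕ) :
    Phi d * 3 ^ m = ternaryPrefix d m + Phi fun k => d (k + m) := by
  induction m with
  | zero => simp [ternaryPrefix]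
  | succ m ih =>
    have h : 3 * Phi (fun k => d (k + m)) = d (m + 1) + Phi fun k => d (k + (m + 1)) := by
      simpa only [Nat.add_comm 1 m, Nat.add_right_comm _ 1 m, Nat.add_assoc] using
        three_mul_Phi (d := fun k => d (k + m)) fun _ => hd _
    rw [pow_succ, ← mul_assoc, ih, ternaryPrefix]
    push_cast
    linarith

lemma Phi_sub_of_eq_of_ne (hd : IsDigitSeq d) (hd' : IsDigitSeq d') {m : ℕ} (hm : m ≠ 0)
    (h : ∀ k ≠ m, d k = d' k) : Phi d - Phi d' = ((d m : ℝ) - d' m) / 3 ^ m := by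
  obtain ⟨j, rfl⟩ := Nat.exists_eq_add_one_of_ne_zero hm
  exact ternaryValue_sub_of_eq_of_ne (fun _ => hd.abs_le _) (fun _ => hd'.abs_le _)
    fun k hk => by rw [h (k + 1) (by omega)]

end Phi

namespace IsCanonicalDigitSeq

variable {d : ℕ → ℕ}

lemma Phi_shift_lt_one (hd : IsCanonicalDigitSeq d) (m : ℕ) : Phi (fun k => d (k + m)) < 1 := by
  obtain ⟨k, hmk, hk⟩ := hd.exists_lt_two m
  obtain ⟨j, rfl⟩ : ∃ j, k = j + 1 + m := ⟨k - m - 1, by omega⟩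
  exact Phi_lt_one (fun _ => hd.isDigitSeq _) hk

lemma floor_Phi_mul_three_pow (hd : IsCanonicalDigitSeq d) (m : ℕ) :
    ⌊Phi d * 3 ^ m⌋₊ = ternaryPrefix d m := by
  rw [Phi_mul_three_pow hd.isDigitSeq,
    Nat.floor_eq_iff (add_nonneg (Nat.cast_nonneg _) (Phi_nonneg _))]
  constructor <;> linarith [Phi_nonneg fun k => d (k + m), hd.Phi_shift_lt_one m]

lemma ternaryDigit_Phi (hd : IsCanonicalDigitSeq d) : ternaryDigit (Phi d) = d := by
  funext k
  have hlt : Phi d < 1 := by simpa using hd.Phi_shift_lt_one 0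
  rw [ternaryDigit, if_neg hlt.ne, Int.floor_toNat, hd.floor_Phi_mul_three_pow]
  cases k with
  | zero => simp [ternaryPrefix, hd.zero]
  | succ k =>
    have := hd.isDigitSeq (k + 1)
    rw [ternaryPrefix]
    omega

lemma update (hd : IsCanonicalDigitSeq d) {m v : ℕ} (hm : m ≠ 0) (hv : v ≤ 2) :
    IsCanonicalDigitSeq (Function.update d m v) where
  isDigitSeq k := by
    rcases eq_or_ne k m with rfl | hk
    · simpa using hv
    · simpa [hk] using hd.isDigitSeq k
  zero := by rw [Function.update_of_ne (Ne.symm hm), hd.zero]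
  exists_lt_two k := by
    obtain ⟨l, hl, hl2⟩ := hd.exists_lt_two (max k m)
    exact ⟨l, by omega, by rwa [Function.update_of_ne (by omega)]⟩

end IsCanonicalDigitSeq

section ternaryDigit

variable {t : ℝ}

lemma floor_mul_three_pow_eq_ternaryPrefix (ht1 : t < 1) (m : ℕ) :
    ⌊t * 3 ^ m⌋₊ = ternaryPrefix (ternaryDigit t) m := by
  induction m with
  | zero => simp [ternaryPrefix, Nat.floor_eq_zero.2 ht1]
  | succ m ih =>
    have hdiv : ⌊t * 3 ^ (m + 1)⌋₊ / 3 = ⌊t * 3 ^ m⌋₊ := by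
      rw [← Nat.floor_div_ofNat, pow_succ, ← mul_assoc, mul_div_cancel_right₀ _ (by norm_num)]
    rw [ternaryPrefix, ← ih, ternaryDigit, if_neg ht1.ne, Int.floor_toNat]
    omega

lemma Phi_ternaryDigit (ht0 : 0 ≤ t) (ht1 : t < 1) : Phi (ternaryDigit t) = t := by
  have hd := isDigitSeq_ternaryDigit t
  have key : ∀ m : ℕ, |Phi (ternaryDigit t) - t| ≤ (1 / 3) ^ m := by
    intro m
    have h := Phi_mul_three_pow hd m
    rw [← floor_mul_three_pow_eq_ternaryPrefix ht1] at h
    have h1 := Nat.floor_le (by positivity : 0 ≤ t * 3 ^ m)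
    have h2 := Nat.lt_floor_add_one (t * 3 ^ m)
    have h3 := Phi_nonneg fun k => ternaryDigit t (k + m)
    have h4 := Phi_le_one fun k => hd (k + m)
    have h3m : (0 : ℝ) < 3 ^ m := by positivity
    -- `t * 3 ^ m` and `Phi (ternaryDigit t) * 3 ^ m` both lie in `[N, N + 1]`, `N = ⌊t * 3 ^ m⌋₊`
    rw [one_div_pow, le_div_iff₀ h3m, ← abs_of_pos h3m, ← abs_mul, sub_mul, abs_le]
    constructor <;> linarith
  by_contra hne
  obtain ⟨m, hm⟩ :=
    exists_pow_lt_of_lt_one (abs_pos.2 (sub_ne_zero.2 hne)) (by norm_num : (1 / 3 : ℝ) < 1)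
  exact (key m).not_gt hm

lemma isCanonicalDigitSeq_ternaryDigit (ht0 : 0 ≤ t) (ht1 : t < 1) :
    IsCanonicalDigitSeq (ternaryDigit t) where
  isDigitSeq := isDigitSeq_ternaryDigit t
  zero := by simp [ternaryDigit, ht1.ne, Int.floor_eq_zero_iff.2 ⟨ht0, ht1⟩]
  exists_lt_two m := by
    by_contra! h
    -- all digits after `m` equal `2`, so `t * 3 ^ m` would be the integer `⌊t * 3 ^ m⌋₊ + 1`
    have htail : Phi (fun k => ternaryDigit t (k + m)) = 1 := by
      rw [Phi_eq_ternaryValue, ← ternaryValue_const_two]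
      congr 1
      funext k
      exact_mod_cast le_antisymm (isDigitSeq_ternaryDigit t _) (h _ (by omega))
    have h1 := Phi_mul_three_pow (isDigitSeq_ternaryDigit t) m
    rw [htail, Phi_ternaryDigit ht0 ht1, ← floor_mul_three_pow_eq_ternaryPrefix ht1] at h1
    linarith [Nat.lt_floor_add_one (t * 3 ^ m)]

end ternaryDigit

lemma xiPerm_zpow_apply (s : ℤ) (a : ℝ) : (xiPerm ^ s) a = if Even s then a else 2 - a := by
  have hsq : xiPerm ^ (2 : ℤ) = 1 := by
    rw [zpow_two]
    ext a
    simp [xiPerm]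
  obtain ⟨k, rfl | rfl⟩ := Int.even_or_odd' s
  · rw [zpow_mul, hsq, one_zpow, if_pos (even_two_mul k)]
    rfl
  · rw [zpow_add, zpow_mul, hsq, one_zpow, one_mul, zpow_one,
      if_neg (Int.not_even_two_mul_add_one k)]
    rfl

lemma abs_xiPerm_zpow_apply_le (s : ℤ) {a : ℝ} (h0 : 0 ≤ a) (h2 : a ≤ 2) :
    |(xiPerm ^ s) a| ≤ 2 := by
  rw [xiPerm_zpow_apply, abs_le]
  split_ifs <;> constructor <;> linarith

lemma abs_xiPerm_zpow_apply_sub (s : ℤ) (a b : ℝ) :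
    |(xiPerm ^ s) a - (xiPerm ^ s) b| = |a - b| := by
  rw [xiPerm_zpow_apply, xiPerm_zpow_apply]
  split_ifs
  · rfl
  · rw [← abs_neg]
    ring_nf

section xcoord

variable {n i : ℕ} {d d' : ℕ → ℕ}

lemma S_eq_sum_sdiff (hn : 0 < n) (hi : 1 ≤ i) (j : ℕ) (d : ℕ → ℕ) :
    S n i j d = ∑ k ∈ Finset.Icc 1 (i + j * n) \ (Finset.range (j + 1)).image (i + · * n),
      (d k : ℤ) := by
  have hsub : (Finset.range (j + 1)).image (i + · * n) ⊆ Finset.Icc 1 (i + j * n) := by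
    intro k hk
    simp only [Finset.mem_image, Finset.mem_range] at hk
    obtain ⟨s, hs, rfl⟩ := hk
    simp only [Finset.mem_Icc]
    exact ⟨by omega, by gcongr; omega⟩
  rw [S, Finset.sum_sdiff_eq_sub hsub, Finset.sum_image]
  intro s _ s' _ h
  simpa [hn.ne'] using h

lemma S_congr (hn : 0 < n) (hi : 1 ≤ i) {j₀ : ℕ} (h : ∀ k ≠ i + j₀ * n, d k = d' k)
    (j : ℕ) :
    S n i j d = S n i j d' := by
  rw [S_eq_sum_sdiff hn hi, S_eq_sum_sdiff hn hi]
  refine Finset.sum_congr rfl fun k hk => ?_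
  rw [h k]
  rintro rfl
  simp only [Finset.mem_sdiff, Finset.mem_Icc, Finset.mem_image, Finset.mem_range] at hk
  exact hk.2 ⟨j₀, by nlinarith [hk.1.2], rfl⟩

lemma xcoord_eq_ternaryValue (n i : ℕ) (d : ℕ → ℕ) :
    xcoord n i d = ternaryValue fun j => (xiPerm ^ S n i j d) (d (i + j * n)) := rfl

lemma abs_xcoord_sub_of_eq_of_ne (hn : 0 < n) (hi : 1 ≤ i) (hd : IsDigitSeq d)
    (hd' : IsDigitSeq d') {j₀ : ℕ} (h : ∀ k ≠ i + j₀ * n, d k = d' k) :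
    |xcoord n i d - xcoord n i d'| =
      |(d (i + j₀ * n) : ℝ) - d' (i + j₀ * n)| / 3 ^ (j₀ + 1) := by
  have hbound (e : ℕ → ℕ) (he : IsDigitSeq e) (j : ℕ) :
      |(xiPerm ^ S n i j e) (e (i + j * n))| ≤ 2 :=
    abs_xiPerm_zpow_apply_le _ (Nat.cast_nonneg _) (by exact_mod_cast he _)
  rw [xcoord_eq_ternaryValue, xcoord_eq_ternaryValue,
    ternaryValue_sub_of_eq_of_ne (hbound d hd) (hbound d' hd') (j := j₀), abs_div,
    S_congr hn hi h, abs_xiPerm_zpow_apply_sub,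
    abs_of_pos (by positivity : (0 : ℝ) < 3 ^ (j₀ + 1))]
  intro j hj
  have hne : i + j * n ≠ i + j₀ * n := by
    intro heq
    exact hj (Nat.eq_of_mul_eq_mul_right hn (by omega))
  rw [S_congr hn hi h, h _ hne]

lemma xcoord_of_forall_even (h : ∀ k, Even (d k)) :
    xcoord n i d = ternaryValue fun j => (d (i + j * n) : ℝ) := by
  have hS (j : ℕ) : Even (S n i j d) :=
    .sub (Finset.even_sum _ fun k _ => (Int.even_coe_nat _).2 (h k))
      (Finset.even_sum _ fun k _ => (Int.even_coe_nat _).2 (h _))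
  simp only [xcoord_eq_ternaryValue, xiPerm_zpow_apply, hS, if_true]

end xcoord

/-- The canonical ternary expansion of `1 - 3⁻ᵐ`. -/
def twosUpTo (m k : ℕ) : ℕ := if 0 < k ∧ k ≤ m then 2 else 0

lemma isCanonicalDigitSeq_twosUpTo (m : ℕ) : IsCanonicalDigitSeq (twosUpTo m) where
  isDigitSeq k := by unfold twosUpTo; split_ifs <;> omega
  zero := by simp [twosUpTo]
  exists_lt_two k := ⟨k + m + 1, by omega, by simp [twosUpTo]⟩

lemma Phi_twosUpTo (m : ℕ) : Phi (twosUpTo m) = 1 - 1 / 3 ^ m := by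
  rw [Phi_eq_ternaryValue, ← ternaryValue_two_of_lt]
  congr 1
  funext k
  simp only [twosUpTo]
  split_ifs <;> first | omega | norm_num

lemma xcoord_twosUpTo {n i : ℕ} (hn : 0 < n) (hi : 1 ≤ i) (j : ℕ) :
    xcoord n i (twosUpTo (i + j * n)) = 1 - 1 / 3 ^ (j + 1) := by
  rw [xcoord_of_forall_even fun k => by unfold twosUpTo; split_ifs <;> decide,
    ← ternaryValue_two_of_lt]
  congr 1
  funext l
  have : l * n ≤ j * n ↔ l < j + 1 := by rw [Nat.mul_le_mul_right_iff hn]; omega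
  simp only [twosUpTo]
  split_ifs <;> first | omega | norm_num

lemma peanoCoord_one (n i : ℕ) : peanoCoord n i 1 = 1 := by
  have h : ternaryDigit 1 = fun _ => 2 := by
    funext k
    simp [ternaryDigit]
  rw [peanoCoord, h, xcoord_of_forall_even fun _ => even_two]
  exact_mod_cast ternaryValue_const_two

lemma IsCanonicalDigitSeq.exists_xcoord_jump {n i : ℕ} {d : ℕ → ℕ}
    (hd : IsCanonicalDigitSeq d) (hn : 0 < n) (hi : 1 ≤ i) (j : ℕ) :
    ∃ d', IsCanonicalDigitSeq d' ∧ |Phi d - Phi d'| = 1 / 3 ^ (i + j * n) ∧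
      |xcoord n i d - xcoord n i d'| = 1 / 3 ^ (j + 1) := by
  set m := i + j * n
  set v := if d m = 1 then 0 else 1
  have hv : |(d m : ℝ) - v| = 1 := by
    have := hd.isDigitSeq m
    interval_cases h : d m <;> norm_num [v, h]
  have hd' := hd.update (m := m) (v := v) (by omega) (by unfold v; split_ifs <;> omega)
  have hagree (k : ℕ) (hk : k ≠ m) : d k = Function.update d m v k :=
    (Function.update_of_ne hk _ _).symm
  refine ⟨_, hd', ?_, ?_⟩
  · rw [Phi_sub_of_eq_of_ne hd.isDigitSeq hd'.isDigitSeq (by omega) hagree, abs_div,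
      Function.update_self, hv, abs_of_pos (by positivity)]
  · rw [abs_xcoord_sub_of_eq_of_ne hn hi hd.isDigitSeq hd'.isDigitSeq hagree,
      Function.update_self, hv]

lemma exists_peanoCoord_jump {n i : ℕ} (hn : 0 < n) (hi : 1 ≤ i) (j : ℕ) {t : ℝ}
    (ht : t ∈ Set.Icc (0 : ℝ) 1) :
    ∃ t' ∈ Set.Icc (0 : ℝ) 1, |t - t'| = 1 / 3 ^ (i + j * n) ∧
      |peanoCoord n i t - peanoCoord n i t'| = 1 / 3 ^ (j + 1) := by
  rcases ht.2.lt_or_eq with ht1 | rfl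
  · obtain ⟨d', hd', hPhi, hx⟩ :=
      (isCanonicalDigitSeq_ternaryDigit ht.1 ht1).exists_xcoord_jump hn hi j
    refine ⟨Phi d', Phi_mem_Icc hd'.isDigitSeq, ?_, ?_⟩
    · rwa [Phi_ternaryDigit ht.1 ht1] at hPhi
    · rwa [peanoCoord, peanoCoord, hd'.ternaryDigit_Phi]
  · -- `ternaryDigit 1` is the non-canonical expansion `0.222…`, so we compare with `1 - 3⁻ᵐ`
    have hd := isCanonicalDigitSeq_twosUpTo (i + j * n)
    refine ⟨_, Phi_mem_Icc hd.isDigitSeq, ?_, ?_⟩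
    · rw [Phi_twosUpTo, sub_sub_cancel, abs_of_pos (by positivity)]
    · rw [peanoCoord_one, peanoCoord, hd.ternaryDigit_Phi, xcoord_twosUpTo hn hi, sub_sub_cancel,
        abs_of_pos (by positivity)]

lemma exists_near_le_abs_peanoCoord_sub {n i : ℕ} (hn : 0 < n) (hi : 1 ≤ i) {t : ℝ}
    (ht : t ∈ Set.Icc (0 : ℝ) 1) {δ : ℝ} (hδ : 0 < δ) :
    ∃ t' ∈ Set.Icc (0 : ℝ) 1, 0 < |t - t'| ∧ |t - t'| < δ ∧
      1 / 3 * |t - t'| ^ (n : ℝ)⁻¹ ≤ |peanoCoord n i t - peanoCoord n i t'| := by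
  obtain ⟨j, hj⟩ := exists_pow_lt_of_lt_one hδ (by norm_num : (1 / 3 : ℝ) < 1)
  obtain ⟨t', ht', hdist, hval⟩ := exists_peanoCoord_jump hn hi j ht
  have hle : |t - t'| ≤ (1 / 3) ^ (j * n) := by
    rw [hdist, one_div_pow]
    gcongr
    · norm_num
    · omega
  refine ⟨t', ht', by rw [hdist]; positivity, ?_, ?_⟩
  · calc |t - t'| ≤ (1 / 3) ^ (j * n) := hle
      _ ≤ (1 / 3) ^ j :=
          pow_le_pow_of_le_one (by norm_num) (by norm_num) (Nat.le_mul_of_pos_right j hn)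
      _ < δ := hj
  · calc 1 / 3 * |t - t'| ^ (n : ℝ)⁻¹ ≤ 1 / 3 * ((1 / 3) ^ (j * n)) ^ (n : ℝ)⁻¹ := by
          gcongr
      _ = 1 / 3 ^ (j + 1) := by
          rw [pow_mul, Real.pow_rpow_inv_natCast (by norm_num) hn.ne', ← one_div_pow, pow_succ']
      _ = _ := hval.symm

theorem peanoCoord_nowhere_holder_general (n i : ℕ) (hn : 2 ≤ n) (hi1 : 1 ≤ i) :
    (∀ q : ℝ, 1 / (n : ℝ) < q → ∀ t ∈ Set.Icc (0 : ℝ) 1,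
      ¬ ∃ C : ℝ, 0 < C ∧ ∃ δ : ℝ, 0 < δ ∧ ∀ t' ∈ Set.Icc (0 : ℝ) 1, |t - t'| < δ →
          |peanoCoord n i t - peanoCoord n i t'| ≤ C * |t - t'| ^ q) ∧
    (∀ t ∈ Set.Icc (0 : ℝ) 1,
      ¬ DifferentiableWithinAt ℝ (peanoCoord n i) (Set.Icc (0 : ℝ) 1) t) := by
  have hnowhere (q : ℝ) (hq : 1 / (n : ℝ) < q) (t : ℝ) (ht : t ∈ Set.Icc (0 : ℝ) 1) :
      ¬ IsHolderWithinAt (peanoCoord n i) (Set.Icc 0 1) t q :=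
    not_isHolderWithinAt_of_forall_exists (by rwa [one_div] at hq)
      (by norm_num : (0 : ℝ) < 1 / 3) fun _ hδ =>
        exists_near_le_abs_peanoCoord_sub (by omega) hi1 ht hδ
  refine ⟨hnowhere, fun t ht hdiff => hnowhere 1 ?_ t ht hdiff.isHolderWithinAt_one⟩
  rw [div_lt_one (by positivity)]
  exact_mod_cast hn

/-- for every `q > 1/n`, `x_i` is nowhere `q`-Hölder continuous on `[0,1]`;
in particular, `x_i` is nowhere differentiable. -/
theorem peanoCoord_nowhere_holder (n i : ℕ) (hn : 2 ≤ n) (hi1 : 1 ≤ i) (hin : i ≤ n) :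
    (∀ q : ℝ, 1 / (n : ℝ) < q → ∀ t ∈ Set.Icc (0 : ℝ) 1,
      ¬ ∃ C : ℝ, 0 < C ∧ ∃ δ : ℝ, 0 < δ ∧ ∀ t' ∈ Set.Icc (0 : ℝ) 1, |t - t'| < δ →
          |peanoCoord n i t - peanoCoord n i t'| ≤ C * |t - t'| ^ q) ∧
    (∀ t ∈ Set.Icc (0 : ℝ) 1,
      ¬ DifferentiableWithinAt ℝ (peanoCoord n i) (Set.Icc (0 : ℝ) 1) t) :=
  peanoCoord_nowhere_holder_general n i hn hi1
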